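/- LRW hybrid permutation identity (core of Lemma 16 of the paper): Fix a tweak τ_{j+1} ∈ 𝒯 and x_{j+1} ∈ V with x_{j+1} ⊕ h(τ_{j+1}) ∉ {x₁ ⊕ h(τ₁), …, x_j ⊕ h(τ_j)}, and s ∈ V with s ∉ {x₁ ⊕ h(τ₁), …, x_j ⊕ h(τ_j)}. Let E' = E ∘ swap(x_{j+1} ⊕ h(τ_{j+1}), s) and define E'^{T_r} by the same recursion with E replaced by E'. Set y_{j+1} = E^{T_j}(s) ⊕ h(τ_{j+1}) and E^{T_{j+1}} = swap(E^{T_j}(x_{j+1} ⊕ h(τ_{j+1})), y_{j+1} ⊕ h(τ_{j+1})) ∘ E^{T_j}. Then E'^{T_j} = E^{T_{j+1}} as permutations of V. -/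
import Mathlib


/-- The reprogrammed permutations `E^{T_i}` of the LRW hybrid argument:
`E^{T_0} = E` and
`E^{T_i} = swap(E^{T_{i-1}}(x_i ⊕ h(τ_i)), y_i ⊕ h(τ_i)) ∘ E^{T_{i-1}}`. -/
def lrwReprog {V 𝒯 : Type*} [DecidableEq V] [Add V]
    (E : Equiv.Perm V) (h : 𝒯 → V) (τ : ℕ → 𝒯) (x y : ℕ → V) : ℕ → Equiv.Perm V
  | 0 => E
  | i + 1 =>
      Equiv.swap (lrwReprog E h τ x y i (x (i + 1) + h (τ (i + 1))))
          (y (i + 1) + h (τ (i + 1))) *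
        lrwReprog E h τ x y i

theorem lrw_aux {V 𝒯 : Type*} [DecidableEq V] [Add V]
    (E : Equiv.Perm V) (h : 𝒯 → V) (τ : ℕ → 𝒯) (x y : ℕ → V) (a s : V) :
    ∀ j : ℕ, (∀ i, 1 ≤ i → i ≤ j → a ≠ x i + h (τ i)) →
      (∀ i, 1 ≤ i → i ≤ j → s ≠ x i + h (τ i)) →
      lrwReprog (E * Equiv.swap a s) h τ x y j =
        lrwReprog E h τ x y j * Equiv.swap a s := by
  intro j
  induction j with
  | zero => intro _ _; rfl
  | succ k ih =>
      intro ha hs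
      have ih' := ih (fun i h1 h2 => ha i h1 (h2.trans (Nat.le_succ k)))
        (fun i h1 h2 => hs i h1 (h2.trans (Nat.le_succ k)))
      have hne1 : x (k + 1) + h (τ (k + 1)) ≠ a :=
        (ha (k + 1) (Nat.le_add_left 1 k) le_rfl).symm
      have hne2 : x (k + 1) + h (τ (k + 1)) ≠ s :=
        (hs (k + 1) (Nat.le_add_left 1 k) le_rfl).symm
      show Equiv.swap _ _ * _ = _
      rw [ih']
      have : (lrwReprog E h τ x y k * Equiv.swap a s) (x (k + 1) + h (τ (k + 1)))
          = lrwReprog E h τ x y k (x (k + 1) + h (τ (k + 1))) := by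
        simp [Equiv.Perm.mul_apply, Equiv.swap_apply_of_ne_of_ne hne1 hne2]
      rw [this, ← mul_assoc]
      rfl

/-- LRW hybrid permutation identity (core of Lemma 16): with
`E' = E ∘ swap(x_{j+1} ⊕ h(τ_{j+1}), s)`, `y_{j+1} = E^{T_j}(s) ⊕ h(τ_{j+1})`, and
`E^{T_{j+1}} = swap(E^{T_j}(x_{j+1} ⊕ h(τ_{j+1})), y_{j+1} ⊕ h(τ_{j+1})) ∘ E^{T_j}`,
we have `E'^{T_j} = E^{T_{j+1}}` as permutations. -/
theorem lrw_hybrid_perm_identity {n j : ℕ} (hn : 1 ≤ n) {𝒯 : Type*}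
    (E : Equiv.Perm (Fin n → ZMod 2)) (h : 𝒯 → Fin n → ZMod 2)
    (τ : ℕ → 𝒯) (x y : ℕ → Fin n → ZMod 2) (s : Fin n → ZMod 2)
    (hxj : ∀ i, 1 ≤ i → i ≤ j → x (j + 1) + h (τ (j + 1)) ≠ x i + h (τ i))
    (hs : ∀ i, 1 ≤ i → i ≤ j → s ≠ x i + h (τ i))
    (yj1 : Fin n → ZMod 2)
    (hyj1 : yj1 = lrwReprog E h τ x y j s + h (τ (j + 1))) :
    lrwReprog (E * Equiv.swap (x (j + 1) + h (τ (j + 1))) s) h τ x y j =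
      Equiv.swap (lrwReprog E h τ x y j (x (j + 1) + h (τ (j + 1))))
          (yj1 + h (τ (j + 1))) *
        lrwReprog E h τ x y j := by
  have hy : yj1 + h (τ (j + 1)) = lrwReprog E h τ x y j s := by
    rw [hyj1, add_assoc]
    have : h (τ (j + 1)) + h (τ (j + 1)) = 0 := by
      funext i
      exact CharTwo.add_self_eq_zero _
    rw [this, add_zero]
  rw [hy, lrw_aux E h τ x y _ s j hxj hs,
    Equiv.swap_apply_apply, mul_assoc, mul_assoc, inv_mul_cancel, mul_one]
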